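/- arXiv:2305.00276 — 2 statements merged into one kernel-verified Lean document; each statement's English description precedes it below -/
import Mathlib

section
/- Suppose c₂=2 and p^{(1,p−1)}_{(2,2),(p−1,1)}≠0 for some (1,p−1)∈∂̃(Γ) with (2,2)∈∂̃(Γ). Then p^{(1,t−1)}_{(2,2),(r−1,1)}=0 for all t with t≠p and all r (whenever (1,t−1),(r−1,1)∈∂̃(Γ)). -/
namespace Paper

/-- A digraph: a set of vertices together with a set of arcs (ordered pairs of
distinct vertices). -/
structure Digraph (V : Type*) where
  Adj : V → V → Prop
  loopless : ∀ v : V, ¬ Adj v v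

variable {V V' : Type*}

namespace Digraph

/-- There is a directed walk of length `n` from `x` to `y`. -/
def HasPath (G : Digraph V) (x y : V) (n : ℕ) : Prop :=
  ∃ f : ℕ → V, f 0 = x ∧ f n = y ∧ ∀ k < n, G.Adj (f k) (f (k + 1))

/-- The distance `∂(x,y)`: the length of a shortest directed path from `x` to `y`. -/
noncomputable def dist (G : Digraph V) (x y : V) : ℕ :=
  sInf {n | G.HasPath x y n}

/-- The two-way distance `∂̃(x,y) = (∂(x,y), ∂(y,x))`. -/
noncomputable def tdist (G : Digraph V) (x y : V) : ℕ × ℕ :=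
  (G.dist x y, G.dist y x)

/-- The two-way distance set `∂̃(Γ)`. -/
def tdSet (G : Digraph V) : Set (ℕ × ℕ) :=
  {p | ∃ x y : V, G.tdist x y = p}

def StronglyConnected (G : Digraph V) : Prop :=
  ∀ x y : V, ∃ n, G.HasPath x y n

/-- `P_{ĩ,j̃}(x,y)`: the set of `z` with `∂̃(x,z) = ĩ` and `∂̃(z,y) = j̃`. -/
def P (G : Digraph V) (i j : ℕ × ℕ) (x y : V) : Set V :=
  {z | G.tdist x z = i ∧ G.tdist z y = j}

open Classical in
/-- The intersection number `p^{h̃}_{ĩ,j̃}`, defined using an arbitrarily chosen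
pair at two-way distance `h̃` (and `0` if there is no such pair). -/
noncomputable def p (G : Digraph V) (h i j : ℕ × ℕ) : ℕ :=
  if hh : ∃ xy : V × V, G.tdist xy.1 xy.2 = h then
    Nat.card (G.P i j hh.choose.1 hh.choose.2)
  else 0

/-- A weakly distance-regular digraph: strongly connected, and
`|P_{ĩ,j̃}(x,y)|` depends only on `∂̃(x,y)`, `ĩ` and `j̃`. -/
def IsWDR (G : Digraph V) : Prop :=
  G.StronglyConnected ∧
    ∀ (i j : ℕ × ℕ) (x y : V), Nat.card (G.P i j x y) = G.p (G.tdist x y) i j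

/-- Commutativity: `p^{h̃}_{ĩ,j̃} = p^{h̃}_{j̃,ĩ}` for all `h̃,ĩ,j̃ ∈ ∂̃(Γ)`. -/
def IsCommutative (G : Digraph V) : Prop :=
  ∀ h i j : ℕ × ℕ, h ∈ G.tdSet → i ∈ G.tdSet → j ∈ G.tdSet → G.p h i j = G.p h j i

/-- `Γ` is an undirected graph, i.e. its arc set is symmetric. -/
def IsUndirected (G : Digraph V) : Prop :=
  ∀ x y : V, G.Adj x y → G.Adj y x

def IsSemicomplete (G : Digraph V) : Prop :=
  ∀ x y : V, x ≠ y → (G.Adj x y ∨ G.Adj y x)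

/-- `Γ` is a complete (undirected) graph. -/
def IsCompleteDigraph (G : Digraph V) : Prop :=
  ∀ x y : V, x ≠ y → (G.Adj x y ∧ G.Adj y x)

/-- The underlying graph of a digraph. -/
def underlying (G : Digraph V) : SimpleGraph V where
  Adj x y := G.Adj x y ∨ G.Adj y x
  symm := ⟨fun _ _ h => h.symm⟩
  loopless := ⟨fun x h => h.elim (G.loopless x) (G.loopless x)⟩

/-- The diameter: the maximum value of the distance function. -/
noncomputable def diameter (G : Digraph V) : ℕ :=
  sSup {n | ∃ x y : V, G.dist x y = n}

/-- The girth: the length of a shortest circuit. -/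
noncomputable def girth (G : Digraph V) : ℕ :=
  sInf {n | 0 < n ∧ ∃ x : V, G.HasPath x x n}

/-- Number of out-neighbours `d⁺(x)`. -/
noncomputable def outDeg (G : Digraph V) (x : V) : ℕ := Nat.card {y | G.Adj x y}

/-- Number of in-neighbours `d⁻(x)`. -/
noncomputable def inDeg (G : Digraph V) (x : V) : ℕ := Nat.card {y | G.Adj y x}

def IsIsomorphicTo (G : Digraph V) (G' : Digraph V') : Prop :=
  ∃ e : V ≃ V', ∀ x y : V, G.Adj x y ↔ G'.Adj (e x) (e y)

/-- The Cartesian product of two digraphs. -/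
def box (G : Digraph V) (G' : Digraph V') : Digraph (V × V') where
  Adj x y := (x.1 = y.1 ∧ G'.Adj x.2 y.2) ∨ (G.Adj x.1 y.1 ∧ x.2 = y.2)
  loopless := fun v h => h.elim (fun h' => G'.loopless v.2 h'.2) (fun h' => G.loopless v.1 h'.1)

/-- Two digraphs have the same intersection numbers. -/
def SameIntersectionNumbers (G : Digraph V) (G' : Digraph V') : Prop :=
  G.tdSet = G'.tdSet ∧
    ∀ h i j : ℕ × ℕ, h ∈ G.tdSet → i ∈ G.tdSet → j ∈ G.tdSet → G.p h i j = G'.p h i j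

/-- Induced subdigraph on a set of vertices. -/
def induce (G : Digraph V) (s : Set V) : Digraph s where
  Adj x y := G.Adj x.1 y.1
  loopless := fun v h => G.loopless v.1 h

end Digraph

/-- The Cartesian product of a family of digraphs. -/
def piBox {ι : Type*} {W : ι → Type*} (G : ∀ i, Digraph (W i)) : Digraph (∀ i, W i) where
  Adj x y := ∃ i, (G i).Adj (x i) (y i) ∧ ∀ j, j ≠ i → x j = y j
  loopless := by
    rintro v ⟨i, hi, -⟩
    exact (G i).loopless _ hi

/-- The Cayley digraph `Cay(A,S)` of an additive group (for `S ⊆ A ∖ {0}`). -/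
def Cay (A : Type*) [AddGroup A] (S : Set A) : Digraph A where
  Adj x y := x ≠ y ∧ y - x ∈ S
  loopless := fun _ h => h.1 rfl

/-- The Cayley graph of an additive group with respect to a symmetric connection set. -/
def cayleyGraph (A : Type*) [AddGroup A] (S : Set A) : SimpleGraph A where
  Adj x y := x ≠ y ∧ (y - x ∈ S ∨ x - y ∈ S)
  symm := ⟨fun _ _ h => ⟨h.1.symm, h.2.symm⟩⟩
  loopless := ⟨fun _ h => h.1 rfl⟩

/-- The Hamming graph `H(ι, S)`: vertices are tuples, adjacent iff they differ in
exactly one coordinate. -/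
def hammingGraph (ι : Type*) (S : Type*) : SimpleGraph (ι → S) where
  Adj x y := ∃ i, x i ≠ y i ∧ ∀ j, j ≠ i → x j = y j
  symm := by
    refine ⟨?_⟩
    rintro x y ⟨i, h1, h2⟩
    exact ⟨i, h1.symm, fun j hj => (h2 j hj).symm⟩
  loopless := by
    refine ⟨?_⟩
    rintro x ⟨i, h1, -⟩
    exact h1 rfl

/-- The folded `n`-cube: vertices are `(n-1)`-tuples over `ℤ₂`, adjacent iff they
differ in exactly one coordinate or in all `n-1` coordinates. -/
def foldedCube (n : ℕ) : SimpleGraph (Fin (n - 1) → ZMod 2) where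
  Adj x y := (∃ i, x i ≠ y i ∧ ∀ j, j ≠ i → x j = y j) ∨ (x ≠ y ∧ ∀ j, x j ≠ y j)
  symm := by
    refine ⟨?_⟩
    rintro x y (⟨i, h1, h2⟩ | ⟨h1, h2⟩)
    · exact Or.inl ⟨i, h1.symm, fun j hj => (h2 j hj).symm⟩
    · exact Or.inr ⟨h1.symm, fun j => (h2 j).symm⟩
  loopless := by
    refine ⟨?_⟩
    rintro x (⟨i, h1, -⟩ | ⟨h1, -⟩)
    · exact h1 rfl
    · exact h1 rfl

/-- The Cartesian product of a family of simple graphs. -/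
def piBoxGraph {ι : Type*} {W : ι → Type*} (G : ∀ i, SimpleGraph (W i)) :
    SimpleGraph (∀ i, W i) where
  Adj x y := ∃ i, (G i).Adj (x i) (y i) ∧ ∀ j, j ≠ i → x j = y j
  symm := by
    refine ⟨?_⟩
    rintro x y ⟨i, h1, h2⟩
    exact ⟨i, (G i).adj_symm h1, fun j hj => (h2 j hj).symm⟩
  loopless := by
    refine ⟨?_⟩
    rintro x ⟨i, h1, -⟩
    exact (G i).irrefl h1

/-- The Shrikhande graph `Cay(ℤ₄ × ℤ₄, {±(1,0), ±(0,1), ±(1,1)})`. -/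
def shrikhande : SimpleGraph (ZMod 4 × ZMod 4) :=
  cayleyGraph (ZMod 4 × ZMod 4) {(1, 0), (-1, 0), (0, 1), (0, -1), (1, 1), (-1, -1)}

/-- The Doob graph `G(d₁, d₂)`: the Cartesian product of `d₁` copies of the
Shrikhande graph with the Hamming graph `H(d₂, 4)`. -/
def doobGraph (d₁ d₂ : ℕ) :
    SimpleGraph ((Fin d₁ → ZMod 4 × ZMod 4) × (Fin d₂ → ZMod 4)) :=
  (piBoxGraph fun _ : Fin d₁ => shrikhande).boxProd (hammingGraph (Fin d₂) (ZMod 4))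

/-- `c_i(x,y)`: the number of neighbours of `y` at distance `i - 1` from `x`. -/
noncomputable def cNum (G : SimpleGraph V) (i : ℕ) (x y : V) : ℕ :=
  Nat.card {z : V | G.Adj y z ∧ G.dist x z = i - 1}

/-- `a_i(x,y)`: the number of neighbours of `y` at distance `i` from `x`. -/
noncomputable def aNum (G : SimpleGraph V) (i : ℕ) (x y : V) : ℕ :=
  Nat.card {z : V | G.Adj y z ∧ G.dist x z = i}

/-- `b_i(x,y)`: the number of neighbours of `y` at distance `i + 1` from `x`. -/
noncomputable def bNum (G : SimpleGraph V) (i : ℕ) (x y : V) : ℕ :=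
  Nat.card {z : V | G.Adj y z ∧ G.dist x z = i + 1}

/-- A distance-regular graph. -/
def IsDRG (G : SimpleGraph V) : Prop :=
  G.Connected ∧
    ∀ (i : ℕ) (x y x' y' : V), G.dist x y = i → G.dist x' y' = i →
      cNum G i x y = cNum G i x' y' ∧ bNum G i x y = bNum G i x' y'

/-- A distance-transitive graph. -/
def IsDistanceTransitive (G : SimpleGraph V) : Prop :=
  G.Connected ∧
    ∀ x y x' y' : V, G.dist x y = G.dist x' y' → ∃ σ : G ≃g G, σ x = x' ∧ σ y = y'

/-- The vertex set of `Γ_i(α)`: all tuples obtained from `α` by inserting an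
arbitrary element of `S` in the `i`-th coordinate. -/
def lineSet {n : ℕ} {S : Type*} (i : Fin (n + 1)) (α : Fin n → S) : Set (Fin (n + 1) → S) :=
  Set.range fun b : S => i.insertNth b α

/-- The induced subdigraph `Γ_i(α)`. -/
def Digraph.line {n : ℕ} {S : Type*} (Γ : Digraph (Fin (n + 1) → S)) (i : Fin (n + 1))
    (α : Fin n → S) : Digraph (lineSet i α) :=
  Γ.induce (lineSet i α)

/-- Pad a tuple of length `m` with the entry `o` to a tuple of length `d`. -/
def pad {S : Type*} (o : S) (d m : ℕ) (α : Fin m → S) : Fin d → S :=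
  fun j => if h : j.1 < m then α ⟨j.1, h⟩ else o

/-- The digraph `Γ^{[m]}` on `S^m`: `(α,β)` is an arc iff the padded tuples form
an arc of `Γ`. -/
def Digraph.trunc {S : Type*} {d : ℕ} (Γ : Digraph (Fin d → S)) (o : S) (m : ℕ) :
    Digraph (Fin m → S) where
  Adj α β := Γ.Adj (pad o d m α) (pad o d m β)
  loopless := fun _ h => Γ.loopless _ h

/-- The digraph `Γ^i` on `S`: `(a,b)` is an arc iff the tuples with `a` resp. `b`
in the `i`-th coordinate and `o` elsewhere form an arc of `Γ`. -/
def Digraph.coordDigraph {S : Type*} {d : ℕ} (Γ : Digraph (Fin d → S)) (o : S) (i : Fin d) :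
    Digraph S where
  Adj a b := Γ.Adj (Function.update (fun _ => o) i a) (Function.update (fun _ => o) i b)
  loopless := fun _ h => Γ.loopless _ h

/-- The set `T = S^{m-1} × {(o,…,o)}` (as a subset of `S^{d-1}`, here `d = n+1`). -/
def Tset {n : ℕ} (S : Type*) (o : S) (m : ℕ) : Set (Fin n → S) :=
  {α | ∀ j : Fin n, m - 1 ≤ j.1 → α j = o}

end Paper


/-! Let `x → y → z` witness the nonvanishing number, so `∂̃(x,z) = (2,2)`. By the hypothesis on
`p` there is also a path `x → u → z` with `∂̃(x,u) = ∂̃(u,z) = (1,p−1)`, and `u ≠ y` since `t ≠ p`.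
As `c₂ = 2`, the common neighbours of `x` and `z` in `Σ` are exactly `y` and `u`. Reading the same
intersection numbers at the pair `(z,x)` gives paths `z → v → x` and `z → w → x` of the two types,
and `v, w ∈ {y, u}`. A vertex on directed 2-paths between `x` and `z` in both directions is at
two-way distance `(1,1)` from both, which forces `p − 1 = t − 1 = 1`. -/

theorem Set.eq_or_eq_of_ncard_eq_two {α : Type*} {s : Set α} {y u w : α} (hs : s.ncard = 2)
    (hy : y ∈ s) (hu : u ∈ s) (hyu : y ≠ u) (hw : w ∈ s) : w = y ∨ w = u := by
  have hsub : ({y, u} : Set α) ⊆ s := Set.insert_subset hy (Set.singleton_subset_iff.2 hu)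
  have hfin : s.Finite := Set.finite_of_ncard_ne_zero (by omega)
  rw [← Set.eq_of_subset_of_ncard_le hsub (by rw [Set.ncard_pair hyu, hs]) hfin] at hw
  exact hw

theorem SimpleGraph.dist_eq_two_iff {V : Type*} {G : SimpleGraph V} {x z : V} :
    G.dist x z = 2 ↔ x ≠ z ∧ ¬ G.Adj x z ∧ (G.commonNeighbors x z).Nonempty := by
  rw [SimpleGraph.dist, ENat.toNat_eq_iff two_ne_zero]
  exact SimpleGraph.edist_eq_two_iff

namespace Paper

variable {V : Type*}

theorem cNum_two_eq_ncard_commonNeighbors (G : SimpleGraph V) (x z : V) :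
    cNum G 2 x z = (G.commonNeighbors x z).ncard := by
  rw [cNum, Nat.card_coe_set_eq]
  congr 1
  ext w
  simp [SimpleGraph.mem_commonNeighbors, SimpleGraph.dist_eq_one_iff_adj, and_comm]

namespace Digraph

variable {G : Digraph V} {x y z w : V}

theorem dist_self (G : Digraph V) (x : V) : G.dist x x = 0 :=
  Nat.eq_zero_of_le_zero <|
    Nat.sInf_le ⟨fun _ => x, rfl, rfl, fun _ h => absurd h (Nat.not_lt_zero _)⟩

theorem dist_le_one_of_adj (h : G.Adj x y) : G.dist x y ≤ 1 := by
  refine Nat.sInf_le ⟨fun k => if k = 0 then x else y, by simp, by simp, fun k hk => ?_⟩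
  obtain rfl : k = 0 := by omega
  simpa using h

theorem hasPath_dist (hG : G.StronglyConnected) (x y : V) : G.HasPath x y (G.dist x y) :=
  Nat.sInf_mem (hG x y)

theorem eq_of_dist_eq_zero (hG : G.StronglyConnected) (h : G.dist x y = 0) : x = y := by
  obtain ⟨f, hx, hy, -⟩ := h ▸ hasPath_dist hG x y
  rw [← hx, ← hy]

theorem adj_of_dist_eq_one (hG : G.StronglyConnected) (h : G.dist x y = 1) : G.Adj x y := by
  obtain ⟨f, hx, hy, hf⟩ := h ▸ hasPath_dist hG x y
  simpa [hx, hy] using hf 0 one_pos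

theorem tdist_comm (G : Digraph V) (x y : V) : G.tdist y x = (G.tdist x y).swap := rfl

theorem one_zero_notMem_tdSet (hG : G.StronglyConnected) : ((1 : ℕ), (0 : ℕ)) ∉ G.tdSet := by
  rintro ⟨x, y, h⟩
  obtain ⟨hxy, hyx⟩ := Prod.mk.inj h
  rw [eq_of_dist_eq_zero hG hyx, dist_self] at hxy
  exact zero_ne_one hxy

theorem mem_P_swap {i j : ℕ × ℕ} (hz : z ∈ G.P i j x y) : y ∈ G.P (G.tdist x y) j.swap x z :=
  ⟨rfl, by rw [tdist_comm, hz.2]⟩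

theorem ne_of_mem_P_of_mem_P {i j i' j' : ℕ × ℕ} (hz : z ∈ G.P i j x y) (hw : w ∈ G.P i' j' x y)
    (hi : i ≠ i') : z ≠ w := by
  rintro rfl
  exact hi (hz.1.symm.trans hw.1)

theorem eq_one_of_mem_P_of_mem_P_swap {a b c d : ℕ} (h₁ : w ∈ G.P (1, a) (1, b) x z)
    (h₂ : w ∈ G.P (1, c) (1, d) z x) : c = 1 := by
  have h₁' := congrArg Prod.fst h₁.2
  have h₂' := congrArg Prod.snd h₂.1
  simp only [tdist] at h₁' h₂'
  omega

theorem mem_commonNeighbors_of_mem_P (hG : G.StronglyConnected) {a b : ℕ}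
    (hw : w ∈ G.P (1, a) (1, b) x z) : w ∈ G.underlying.commonNeighbors x z :=
  G.underlying.mem_commonNeighbors.2
    ⟨Or.inl (adj_of_dist_eq_one hG (congrArg Prod.fst hw.1)),
      Or.inr (adj_of_dist_eq_one hG (congrArg Prod.fst hw.2))⟩

theorem underlying_dist_eq_two (hxz : 2 ≤ G.dist x z) (hzx : 2 ≤ G.dist z x)
    (hc : (G.underlying.commonNeighbors x z).Nonempty) : G.underlying.dist x z = 2 := by
  refine SimpleGraph.dist_eq_two_iff.2 ⟨?_, ?_, hc⟩
  · rintro rfl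
    rw [dist_self] at hxz
    omega
  · rintro (h | h)
    · have := dist_le_one_of_adj h
      omega
    · have := dist_le_one_of_adj h
      omega

theorem IsWDR.p_tdist_ne_zero_iff [Finite V] (hG : G.IsWDR) {i j : ℕ × ℕ} :
    G.p (G.tdist x y) i j ≠ 0 ↔ (G.P i j x y).Nonempty := by
  rw [← hG.2, Nat.card_ne_zero, Set.nonempty_coe_sort]
  exact ⟨And.left, fun h => ⟨h, Set.toFinite _⟩⟩

theorem IsWDR.p_swap_ne_zero [Finite V] (hG : G.IsWDR) {h i j : ℕ × ℕ} (hh : h ∈ G.tdSet)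
    (hne : G.p h i j ≠ 0) : G.p i h j.swap ≠ 0 := by
  obtain ⟨x, y, rfl⟩ := hh
  obtain ⟨z, hz⟩ := hG.p_tdist_ne_zero_iff.1 hne
  rw [← hz.1]
  exact hG.p_tdist_ne_zero_iff.2 ⟨y, mem_P_swap hz⟩

theorem eq_one_of_mem_P_swap_of_cNum_eq_two (hG : G.StronglyConnected)
    (hc2 : ∀ x y : V, G.underlying.dist x y = 2 → cNum G.underlying 2 x y = 2)
    (hxz : G.tdist x z = (2, 2)) {u : V} {a b a' b' c d : ℕ} (hy : y ∈ G.P (1, a) (1, b) x z)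
    (hu : u ∈ G.P (1, a') (1, b') x z) (hyu : y ≠ u) (hw : w ∈ G.P (1, c) (1, d) z x) : c = 1 := by
  have hu' := mem_commonNeighbors_of_mem_P hG hu
  have hdist : G.underlying.dist x z = 2 :=
    underlying_dist_eq_two (congrArg Prod.fst hxz).ge (congrArg Prod.snd hxz).ge ⟨u, hu'⟩
  have hcard : (G.underlying.commonNeighbors x z).ncard = 2 := by
    rw [← cNum_two_eq_ncard_commonNeighbors, hc2 x z hdist]
  have hw' := G.underlying.commonNeighbors_symm z x ▸ mem_commonNeighbors_of_mem_P hG hw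
  rcases Set.eq_or_eq_of_ncard_eq_two hcard (mem_commonNeighbors_of_mem_P hG hy) hu' hyu hw'
    with rfl | rfl
  exacts [eq_one_of_mem_P_of_mem_P_swap hy hw, eq_one_of_mem_P_of_mem_P_swap hu hw]

end Digraph

end Paper

open Paper in
theorem lemma_pneqt_general {V : Type*} [Finite V] (Γ : Paper.Digraph V)
    (hwdr : Γ.IsWDR)
    (hc2 : ∀ x y : V, Γ.underlying.dist x y = 2 → cNum Γ.underlying 2 x y = 2)
    (p : ℕ)
    (hp : ((1 : ℕ), p - 1) ∈ Γ.tdSet)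
    (hne : Γ.p (1, p - 1) (2, 2) (p - 1, 1) ≠ 0) :
    ∀ t r : ℕ, t ≠ p → ((1 : ℕ), t - 1) ∈ Γ.tdSet → (r - 1, (1 : ℕ)) ∈ Γ.tdSet →
      Γ.p (1, t - 1) (2, 2) (r - 1, 1) = 0 := by
  intro t r htp ht _
  by_contra hne'
  obtain ⟨x, y, hxy⟩ := ht
  obtain ⟨z, hz⟩ := hwdr.p_tdist_ne_zero_iff.1 (by rwa [hxy])
  have hxz : Γ.tdist x z = (2, 2) := hz.1
  have hzx : Γ.tdist z x = (2, 2) := by rw [Digraph.tdist_comm, hxz]; rfl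
  have hy : y ∈ Γ.P (1, t - 1) (1, r - 1) x z := hxy ▸ Digraph.mem_P_swap hz
  have hpp : Γ.p (2, 2) (1, p - 1) (1, p - 1) ≠ 0 := hwdr.p_swap_ne_zero hp hne
  have htt : Γ.p (2, 2) (1, t - 1) (1, r - 1) ≠ 0 := hxz ▸ hwdr.p_tdist_ne_zero_iff.2 ⟨y, hy⟩
  obtain ⟨u, hu⟩ := hwdr.p_tdist_ne_zero_iff.1 (hxz ▸ hpp)
  obtain ⟨v, hv⟩ := hwdr.p_tdist_ne_zero_iff.1 (hzx ▸ hpp)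
  obtain ⟨w, hw⟩ := hwdr.p_tdist_ne_zero_iff.1 (hzx ▸ htt)
  have hp0 : p - 1 ≠ 0 := fun h => Digraph.one_zero_notMem_tdSet hwdr.1 (h ▸ hp)
  have ht0 : t - 1 ≠ 0 := fun h => Digraph.one_zero_notMem_tdSet hwdr.1 ⟨x, y, h ▸ hxy⟩
  have hyu : y ≠ u :=
    Digraph.ne_of_mem_P_of_mem_P hy hu (by simp only [ne_eq, Prod.mk.injEq]; omega)
  have hp1 : p - 1 = 1 :=
    Digraph.eq_one_of_mem_P_swap_of_cNum_eq_two hwdr.1 hc2 hxz hy hu hyu hv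
  have ht1 : t - 1 = 1 :=
    Digraph.eq_one_of_mem_P_swap_of_cNum_eq_two hwdr.1 hc2 hxz hy hu hyu hw
  omega

open Paper in
/-- **Lemma 3.2.** Suppose `c₂ = 2` and `p^{(1,p−1)}_{(2,2),(p−1,1)} ≠ 0`. Then
`p^{(1,t−1)}_{(2,2),(r−1,1)} = 0` for all `t ≠ p` and all `r`. -/
theorem lemma_pneqt {V : Type*} [Finite V] [Nonempty V] (Γ : Paper.Digraph V)
    (hwdr : Γ.IsWDR) (hcomm : Γ.IsCommutative)
    (hdrg : IsDRG Γ.underlying)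
    (hc2 : ∀ x y : V, Γ.underlying.dist x y = 2 → cNum Γ.underlying 2 x y = 2)
    (p : ℕ)
    (hp : ((1 : ℕ), p - 1) ∈ Γ.tdSet) (h22 : ((2 : ℕ), (2 : ℕ)) ∈ Γ.tdSet)
    (hne : Γ.p (1, p - 1) (2, 2) (p - 1, 1) ≠ 0) :
    ∀ t r : ℕ, t ≠ p → ((1 : ℕ), t - 1) ∈ Γ.tdSet → (r - 1, (1 : ℕ)) ∈ Γ.tdSet →
      Γ.p (1, t - 1) (2, 2) (r - 1, 1) = 0 :=
  lemma_pneqt_general Γ hwdr hc2 p hp hne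
end

section
/- Let 1≤i≤m, α∈T, and x∈V(Γ)∖V(Γᵢ(α)). Then x has at most one neighbour in V(Γᵢ(α)) in the underlying graph Σ. -/
/-! The line `Γᵢ(α)` is a clique of `Σ` of size `q`: its padded restriction to the first `m`
coordinates is a line of the Hamming graph `Γ^{[m]}`. If `x` were adjacent to two distinct
vertices `y₁, y₂` of it, then `x` and the other `q - 2` vertices of the line would be `q - 1`
common neighbours of the adjacent pair `y₁, y₂`, contradicting `a₁ = q - 2`. -/

open SimpleGraph

namespace Paper

lemma Digraph.trunc_underlying_adj {S : Type*} {d : ℕ} (Γ : Digraph (Fin d → S)) (o : S)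
    (m : ℕ) (u v : Fin m → S) :
    (Γ.trunc o m).underlying.Adj u v ↔ Γ.underlying.Adj (pad o d m u) (pad o d m v) :=
  Iff.rfl

lemma pad_castLE {S : Type*} {o : S} {d m : ℕ} (hmd : m ≤ d) {y : Fin d → S}
    (hy : ∀ j : Fin d, m ≤ j.1 → y j = o) :
    pad o d m (fun k => y (Fin.castLE hmd k)) = y := by
  funext j
  unfold pad
  split_ifs with h
  · rfl
  · exact (hy j (not_lt.mp h)).symm

lemma insertNth_apply_of_mem_Tset {S : Type*} {o : S} {n m : ℕ} {α : Fin n → S}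
    (hα : α ∈ Tset S o m) {i : Fin (n + 1)} (hi : i.1 < m) (b : S) {j : Fin (n + 1)}
    (hj : m ≤ j.1) : (i.insertNth b α : Fin (n + 1) → S) j = o := by
  have hij : i < j := Fin.lt_def.mpr (by omega)
  rw [Fin.insertNth_apply_above hij, eq_rec_constant]
  exact hα _ (by simp only [Fin.val_pred]; omega)

lemma insertNth_apply_of_ne {S : Type*} {n : ℕ} {i j : Fin (n + 1)} (hj : j ≠ i)
    (α : Fin n → S) (b b' : S) :
    (i.insertNth b α : Fin (n + 1) → S) j = (i.insertNth b' α : Fin (n + 1) → S) j := by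
  obtain ⟨k, rfl⟩ := Fin.exists_succAbove_eq hj
  simp only [Fin.insertNth_apply_succAbove]

lemma ncard_lineSet {S : Type*} {n : ℕ} (i : Fin (n + 1)) (α : Fin n → S) :
    (lineSet i α).ncard = Nat.card S :=
  Set.ncard_range_of_injective (Fin.insertNth_left_injective (α := fun _ => S) α)

lemma isClique_lineSet {S : Type*} {n m : ℕ} {Γ : Digraph (Fin (n + 1) → S)} {o : S}
    (hmd : m ≤ n + 1) (hham : (Γ.trunc o m).underlying = hammingGraph (Fin m) S)
    {i : Fin (n + 1)} (hi : i.1 < m) {α : Fin n → S} (hα : α ∈ Tset S o m) :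
    Γ.underlying.IsClique (lineSet i α) := by
  rintro _ ⟨b, rfl⟩ _ ⟨b', rfl⟩ hne
  let restrict (c : S) : Fin m → S :=
    fun k => (i.insertNth c α : Fin (n + 1) → S) (Fin.castLE hmd k)
  have hpad (c : S) : pad o (n + 1) m (restrict c) = i.insertNth c α :=
    pad_castLE hmd fun _ hj => insertNth_apply_of_mem_Tset hα hi c hj
  have hadj : (hammingGraph (Fin m) S).Adj (restrict b) (restrict b') := by
    have hcast : Fin.castLE hmd ⟨i, hi⟩ = i := rfl
    refine ⟨⟨i, hi⟩, ?_, fun k hk => insertNth_apply_of_ne ?_ α b b'⟩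
    · simpa only [restrict, hcast, Fin.insertNth_apply_same] using
        fun h : b = b' => hne (congrArg (fun c => (i.insertNth c α : Fin (n + 1) → S)) h)
    · exact fun h => hk (Fin.castLE_injective hmd (h.trans hcast.symm))
  rw [← hham, Digraph.trunc_underlying_adj, hpad, hpad] at hadj
  exact hadj

lemma ncard_sub_two_lt_aNum_of_isClique {V : Type*} [Finite V] {G : SimpleGraph V} {s : Set V}
    (hs : G.IsClique s) {x y₁ y₂ : V} (hx : x ∉ s) (hy₁ : y₁ ∈ s) (hy₂ : y₂ ∈ s)
    (h₁ : G.Adj x y₁) (h₂ : G.Adj x y₂) : s.ncard - 2 < aNum G 1 y₁ y₂ := by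
  have hsub : insert x (s \ {y₁, y₂}) ⊆ {z | G.Adj y₂ z ∧ G.dist y₁ z = 1} := by
    rintro z (rfl | ⟨hz, hzy⟩)
    · exact ⟨h₂.symm, dist_eq_one_iff_adj.mpr h₁.symm⟩
    · simp only [Set.mem_insert_iff, Set.mem_singleton_iff, not_or] at hzy
      exact ⟨hs hy₂ hz (Ne.symm hzy.2), dist_eq_one_iff_adj.mpr (hs hy₁ hz (Ne.symm hzy.1))⟩
  have hpair : ({y₁, y₂} : Set V).ncard ≤ 2 := by
    simpa using Set.ncard_insert_le y₁ {y₂}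
  calc s.ncard - 2 < (s \ {y₁, y₂}).ncard + 1 := by
        have := Set.le_ncard_sdiff {y₁, y₂} s
        omega
    _ = (insert x (s \ {y₁, y₂})).ncard :=
        (Set.ncard_insert_of_notMem fun h => hx h.1).symm
    _ ≤ aNum G 1 y₁ y₂ := by
        rw [aNum, Nat.card_coe_set_eq]
        exact Set.ncard_le_ncard hsub

end Paper

open Paper in
theorem lemma_at_most_one_neighbour_general {S : Type*} [Finite S] {n : ℕ}
    (Γ : Paper.Digraph (Fin (n + 1) → S)) (q : ℕ) (hq : q = Nat.card S)
    (ha1 : ∀ x y, Γ.underlying.dist x y = 1 → aNum Γ.underlying 1 x y = q - 2)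
    (o : S) (m : ℕ) (hmd : m ≤ n + 1)
    (hham : (Γ.trunc o m).underlying = hammingGraph (Fin m) S)
    (i : Fin (n + 1)) (hi : i.1 < m)
    (α : Fin n → S) (hα : α ∈ Tset S o m)
    (x : Fin (n + 1) → S) (hx : x ∉ lineSet i α) :
    Set.Subsingleton {y | y ∈ lineSet i α ∧ Γ.underlying.Adj x y} := by
  rintro y₁ ⟨hy₁, hx₁⟩ y₂ ⟨hy₂, hx₂⟩
  by_contra hne
  have hclique := isClique_lineSet hmd hham hi hα
  have hlt := ncard_sub_two_lt_aNum_of_isClique hclique hx hy₁ hy₂ hx₁ hx₂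
  rw [ha1 _ _ (dist_eq_one_iff_adj.mpr (hclique hy₁ hy₂ hne)), ncard_lineSet, ← hq] at hlt
  exact lt_irrefl _ hlt

open Paper in
/-- **Lemma 3.6.** A vertex outside `Γᵢ(α)` has at most one neighbour in
`Γᵢ(α)` (in the underlying graph). -/
theorem lemma_at_most_one_neighbour {S : Type*} [Finite S] {n : ℕ}
    (Γ : Paper.Digraph (Fin (n + 1) → S)) (q : ℕ) (hq : q = Nat.card S)
    (hwdr : Γ.IsWDR) (hcomm : Γ.IsCommutative)
    (hdrg : IsDRG Γ.underlying)
    (ha1 : ∀ x y, Γ.underlying.dist x y = 1 → aNum Γ.underlying 1 x y = q - 2)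
    (hc2 : ∀ x y, Γ.underlying.dist x y = 2 → cNum Γ.underlying 2 x y = 2)
    (o : S) (m : ℕ) (hm1 : 1 ≤ m) (hmd : m ≤ n + 1)
    (hham : (Γ.trunc o m).underlying = hammingGraph (Fin m) S)
    (i : Fin (n + 1)) (hi : i.1 < m)
    (α : Fin n → S) (hα : α ∈ Tset S o m)
    (x : Fin (n + 1) → S) (hx : x ∉ lineSet i α) :
    Set.Subsingleton {y | y ∈ lineSet i α ∧ Γ.underlying.Adj x y} :=
  lemma_at_most_one_neighbour_general Γ q hq ha1 o m hmd hham i hi α hα x hx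
end
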